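/- arXiv:math-ph/0111032 — 3 statements merged into one kernel-verified Lean document; each statement's English description precedes it below -/
import Mathlib

section
/- Let Ω : ℝ³ → ℝ be continuously differentiable and let O ∈ ℝ be such that |∇Ω(q)| ≤ 1 for every q ∈ ℝ³ with Ω(q) ≤ O. Define E₀(P) := inf_{k ∈ ℝ³} (Ω(P − k) + |k|). Then for every P ∈ ℝ³ with Ω(P) ≤ O one has E₀(P) = Ω(P). -/
/-!
Along the segment from `P` to `q`, `Ω` can only decrease while it stays below `Ω P ≤ O`, and
there `|∇Ω| ≤ 1`; hence `Ω` drops by at most `‖q - P‖` over the segment, i.e.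
`Ω P ≤ Ω q + ‖q - P‖`. With `q = P - k` this bounds the infimum below by `Ω P`, and `k = 0`
attains the bound.
-/

open Set Filter Topology

theorem le_image_add_mul_of_neg_le_deriv_right_on_sublevel {f f' : ℝ → ℝ} {a b L : ℝ}
    (hL : 0 ≤ L) (hf : ContinuousOn f (Icc a b))
    (hf' : ∀ x ∈ Ico a b, HasDerivWithinAt f (f' x) (Ici x) x)
    (bound : ∀ x ∈ Ico a b, f x ≤ f a → -L ≤ f' x) :
    ∀ ⦃x⦄, x ∈ Icc a b → f a ≤ f x + L * (x - a) := by
  intro x hx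
  -- Fence `-f` by a line of slope `L + r`: at a contact point `f` lies below `f a`, where
  -- the slope bound holds strictly.
  have fence : ∀ r > 0, f a ≤ f x + (L + r) * (x - a) := by
    intro r hr
    have fenced := image_le_of_deriv_right_lt_deriv_boundary (f := fun t => -f t) (f' := fun t => -f' t)
      (B := fun t => -f a + (L + r) * (t - a)) (B' := fun _ => L + r) hf.neg
      (fun t ht => (hf' t ht).neg) (by simp)
      (fun t => by
        simpa using (((hasDerivAt_id t).sub_const a).const_mul (L + r)).const_add (-f a))
      (fun t ht heq => by
        have : f t ≤ f a := by nlinarith [ht.1]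
        linarith [bound t ht this]) hx
    linarith [fenced]
  have hlim : Tendsto (fun r => f x + (L + r) * (x - a)) (𝓝[>] 0) (𝓝 (f x + L * (x - a))) :=
    tendsto_nhdsWithin_of_tendsto_nhds (Continuous.tendsto' (by fun_prop) 0 _ (by simp))
  exact ge_of_tendsto hlim (eventually_nhdsWithin_of_forall fence)

theorem le_add_mul_norm_sub_of_norm_fderiv_le_on_sublevel {E : Type*} [NormedAddCommGroup E]
    [NormedSpace ℝ E] {f : E → ℝ} {C : ℝ} {x : E} (hf : Differentiable ℝ f)
    (bound : ∀ y, f y ≤ f x → ‖fderiv ℝ f y‖ ≤ C) (y : E) :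
    f x ≤ f y + C * ‖y - x‖ := by
  have hC : 0 ≤ C := (norm_nonneg _).trans (bound x le_rfl)
  have hγ : ∀ t : ℝ, HasDerivAt (fun t : ℝ => x + t • (y - x)) (y - x) t := fun t => by
    simpa using ((hasDerivAt_id t).smul_const (y - x)).const_add x
  have along_segment := le_image_add_mul_of_neg_le_deriv_right_on_sublevel
    (f := fun t : ℝ => f (x + t • (y - x)))
    (f' := fun t => fderiv ℝ f (x + t • (y - x)) (y - x)) (a := 0) (b := 1)
    (mul_nonneg hC (norm_nonneg _)) (hf.continuous.comp (by fun_prop)).continuousOn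
    (fun t _ => ((hf _).hasFDerivAt.comp_hasDerivAt t (hγ t)).hasDerivWithinAt)
    (fun t _ ht => by
      rw [zero_smul, add_zero] at ht
      calc -(C * ‖y - x‖) ≤ -‖fderiv ℝ f (x + t • (y - x)) (y - x)‖ :=
            neg_le_neg ((ContinuousLinearMap.le_opNorm _ _).trans
              (mul_le_mul_of_nonneg_right (bound _ ht) (norm_nonneg _)))
        _ ≤ _ := neg_abs_le _)
    (right_mem_Icc.2 zero_le_one)
  simpa using along_segment

theorem norm_gradient_eq_norm_fderiv {F : Type*} [NormedAddCommGroup F] [InnerProductSpace ℝ F]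
    [CompleteSpace F] (f : F → ℝ) (x : F) : ‖gradient f x‖ = ‖fderiv ℝ f x‖ := by
  rw [← toDual_gradient, LinearIsometryEquiv.norm_map]

/-- If `Ω : ℝ³ → ℝ` is `C¹` and `|∇Ω| ≤ 1` on the sublevel set `{Ω ≤ O}`,
then the free ground-state energy `E₀(P) = inf_k (Ω(P - k) + |k|)` equals `Ω(P)` whenever
`Ω(P) ≤ O`. -/
theorem statement3 (Ω : EuclideanSpace ℝ (Fin 3) → ℝ) (hΩ : ContDiff ℝ 1 Ω) (O : ℝ)
    (hgrad : ∀ q : EuclideanSpace ℝ (Fin 3), Ω q ≤ O → ‖gradient Ω q‖ ≤ 1) :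
    ∀ P : EuclideanSpace ℝ (Fin 3), Ω P ≤ O →
      (⨅ k : EuclideanSpace ℝ (Fin 3), (Ω (P - k) + ‖k‖)) = Ω P := by
  intro P hP
  have lower : ∀ k, Ω P ≤ Ω (P - k) + ‖k‖ := fun k => by
    simpa [sub_sub_cancel_left] using le_add_mul_norm_sub_of_norm_fderiv_le_on_sublevel (C := 1)
      (hΩ.differentiable one_ne_zero)
      (fun q hq => norm_gradient_eq_norm_fderiv Ω q ▸ hgrad q (hq.trans hP)) (P - k)
  refine le_antisymm ?_ (le_ciInf lower)
  simpa using ciInf_le ⟨Ω P, forall_mem_range.2 lower⟩ 0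
end

section
/- Let Ω : ℝ³ → ℝ be continuously differentiable and let O ∈ ℝ be such that |∇Ω(q)| ≤ 1 for every q ∈ ℝ³ with Ω(q) ≤ O. Define E₀(P) := inf_{k ∈ ℝ³} (Ω(P − k) + |k|). Then for every P ∈ ℝ³, if E₀(P) ≤ O then Ω(P) ≤ O. -/
/-!
While a straight path runs inside `{Ω ≤ O}`, `Ω` decreases at most at unit speed along it, so
`Ω x ≥ O - ‖x - y‖` whenever `Ω y ≥ O`.
If `Ω P > O`, then `Ω > O + d` on a closed ball of radius `r` about `P`. For `‖k‖ ≤ r` this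
bounds `Ω (P - k)` directly; otherwise apply the previous estimate from the point where the
segment `[P, P - k]` leaves the ball, which gives `Ω (P - k) ≥ O - (‖k‖ - r)`. Hence
`E₀(P) ≥ O + min d r > O`.
-/

open Set Filter Topology Metric

theorem le_image_of_neg_le_deriv_right_on_sublevel {φ φ' : ℝ → ℝ} {a b c L : ℝ} (hL : 0 ≤ L)
    (hφ : ContinuousOn φ (Icc a b)) (hφ' : ∀ x ∈ Ico a b, HasDerivWithinAt φ (φ' x) (Ici x) x)
    (ha : c ≤ φ a) (hbound : ∀ x ∈ Ico a b, φ x ≤ c → -L ≤ φ' x) :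
    ∀ ⦃x⦄, x ∈ Icc a b → c - L * (x - a) ≤ φ x := by
  intro x hx
  -- The fence `c - (L + ε) * (t - a)` can only meet `φ` inside `{φ ≤ c}`, where `-φ' ≤ L < L + ε`.
  have fence : ∀ ε > 0, c - (L + ε) * (x - a) ≤ φ x := by
    intro ε hε
    have := image_le_of_deriv_right_lt_deriv_boundary (f := fun t => -φ t) (f' := fun t => -φ' t)
      (B := fun t => -c + (L + ε) * (t - a)) (B' := fun _ => L + ε) hφ.neg
      (fun t ht => (hφ' t ht).neg) (by simpa using ha)
      (fun t => by simpa using ((hasDerivAt_id t).sub_const a).const_mul (L + ε) |>.const_add (-c))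
      (fun t ht heq => by
        have : φ t ≤ c := by nlinarith [ht.1]
        linarith [hbound t ht this]) hx
    linarith
  have hlim : Tendsto (fun ε => c - (L + ε) * (x - a)) (𝓝[>] 0) (𝓝 (c - L * (x - a))) := by
    refine tendsto_nhdsWithin_of_tendsto_nhds ?_
    have : Continuous fun ε : ℝ => c - (L + ε) * (x - a) := by fun_prop
    simpa using this.tendsto 0
  exact le_of_tendsto hlim (eventually_nhdsWithin_of_forall fence)

section NormedSpace

variable {E : Type*} [NormedAddCommGroup E] [NormedSpace ℝ E] {f : E → ℝ}

theorem sub_mul_norm_sub_le_of_norm_fderiv_le_on_sublevel {c L : ℝ} (hL : 0 ≤ L)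
    (hf : Differentiable ℝ f) (hbound : ∀ z, f z ≤ c → ‖fderiv ℝ f z‖ ≤ L) {x y : E}
    (hy : c ≤ f y) : c - L * ‖x - y‖ ≤ f x := by
  set γ : ℝ → E := fun t => y + t • (x - y)
  have hγ : ∀ t, HasDerivAt γ (x - y) t := fun t => by
    simpa only [id, one_smul] using ((hasDerivAt_id t).smul_const (x - y)).const_add y
  have hφ : ∀ t, HasDerivAt (f ∘ γ) (fderiv ℝ f (γ t) (x - y)) t := fun t =>
    (hf (γ t)).hasFDerivAt.comp_hasDerivAt t (hγ t)
  have key := le_image_of_neg_le_deriv_right_on_sublevel (b := 1) (mul_nonneg hL (norm_nonneg _))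
    (fun t _ => (hφ t).continuousAt.continuousWithinAt) (fun t _ => (hφ t).hasDerivWithinAt)
    (by simpa [γ] using hy)
    (fun t _ ht => by
      have := ((fderiv ℝ f (γ t)).le_opNorm (x - y)).trans
        (mul_le_mul_of_nonneg_right (hbound _ ht) (norm_nonneg _))
      linarith [neg_abs_le (fderiv ℝ f (γ t) (x - y)), Real.norm_eq_abs (fderiv ℝ f (γ t) (x - y))])
    (right_mem_Icc.mpr zero_le_one)
  simpa [γ] using key

theorem add_min_le_apply_sub_add_norm {c d r : ℝ} (hf : Differentiable ℝ f)
    (hbound : ∀ z, f z ≤ c → ‖fderiv ℝ f z‖ ≤ 1) (hd : 0 ≤ d) (hr : 0 ≤ r) {P : E}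
    (hball : closedBall P r ⊆ {x | c + d < f x}) (k : E) : c + min d r ≤ f (P - k) + ‖k‖ := by
  rcases le_or_gt ‖k‖ r with hk | hk
  · have : c + d < f (P - k) := hball (by simpa [dist_eq_norm] using hk)
    linarith [min_le_left d r, norm_nonneg k]
  · have hk0 : 0 < ‖k‖ := hr.trans_lt hk
    set Q := P - (r / ‖k‖) • k
    have hQ : c + d < f Q := hball <| by simp [Q, norm_smul, abs_of_nonneg hr, hk0.ne']
    have hdist : ‖(P - k) - Q‖ = ‖k‖ - r := by
      have : P - k - Q = (r / ‖k‖ - 1) • k := by simp only [Q, sub_smul, one_smul]; abel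
      rw [this, norm_smul, Real.norm_of_nonpos (by rw [sub_nonpos, div_le_one hk0]; exact hk.le)]
      field_simp
      ring
    have := sub_mul_norm_sub_le_of_norm_fderiv_le_on_sublevel zero_le_one hf hbound (x := P - k)
      (by linarith : c ≤ f Q)
    linarith [min_le_right d r]

end NormedSpace

/-- If `Ω : ℝ³ → ℝ` is `C¹` and `|∇Ω| ≤ 1` on the sublevel set `{Ω ≤ O}`,
and `E₀(P) := inf_k (Ω(P - k) + |k|)` satisfies `E₀(P) ≤ O`, then `Ω(P) ≤ O`. -/
theorem statement4 (Ω : EuclideanSpace ℝ (Fin 3) → ℝ) (hΩ : ContDiff ℝ 1 Ω) (O : ℝ)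
    (hgrad : ∀ q : EuclideanSpace ℝ (Fin 3), Ω q ≤ O → ‖gradient Ω q‖ ≤ 1) :
    ∀ P : EuclideanSpace ℝ (Fin 3),
      (⨅ k : EuclideanSpace ℝ (Fin 3), (Ω (P - k) + ‖k‖)) ≤ O → Ω P ≤ O := by
  intro P hE
  by_contra! hP
  have hΩd : Differentiable ℝ Ω := hΩ.differentiable one_ne_zero
  have hfderiv : ∀ q, Ω q ≤ O → ‖fderiv ℝ Ω q‖ ≤ 1 := fun q hq => by
    simpa [gradient] using hgrad q hq
  obtain ⟨d, hd, hPd⟩ : ∃ d > 0, O + d < Ω P := ⟨(Ω P - O) / 2, by linarith, by linarith⟩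
  obtain ⟨r, hr, hball⟩ : ∃ r > 0, closedBall P r ⊆ {x | O + d < Ω x} :=
    nhds_basis_closedBall.mem_iff.mp <|
      (isOpen_lt continuous_const hΩd.continuous).mem_nhds hPd
  have hlower : O + min d r ≤ ⨅ k, Ω (P - k) + ‖k‖ :=
    le_ciInf (add_min_le_apply_sub_add_norm hΩd hfderiv hd.le hr.le hball)
  linarith [lt_min hd hr]
end

section
/- Let Ω : ℝ³ → ℝ be twice continuously differentiable with B := sup_{p ∈ ℝ³} ‖D²Ω(p)‖ < ∞, where D²Ω(p) is the Hessian of Ω at p and ‖·‖ its operator norm. Let β > 0 and let O ∈ ℝ be such that |∇Ω(q)| ≤ β for every q with Ω(q) ≤ O. Then for every P ∈ ℝ³ with Ω(P) ≤ O and all k, q ∈ ℝ³ one has Ω(P − k − q) − Ω(P − q) ≥ −β·|k| − B·|k|·|q|. -/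
/-!
Along the segment `t ↦ P - t • k` the value of `Ω` can only drop while the path stays in the
sublevel set `{Ω ≤ Ω P}`, where the slope is at most `β ‖k‖`; a barrier argument therefore gives
`Ω (P - k) ≥ Ω P - β ‖k‖`. Shifting both points by `-q` changes the difference by at most
`B ‖k‖ ‖q‖`, since the bounded Hessian makes `w ↦ Ω (w - q) - Ω w` Lipschitz with constant `B ‖q‖`.
-/

open Set

section SublevelSet

variable {E : Type*} [NormedAddCommGroup E] [NormedSpace ℝ E]

theorem le_apply_sub_of_norm_fderiv_le_on_sublevelSet {f : E → ℝ} (hf : Differentiable ℝ f)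
    {β : ℝ} {P : E} (hgrad : ∀ q, f q ≤ f P → ‖fderiv ℝ f q‖ ≤ β) (k : E) :
    f P - β * ‖k‖ ≤ f (P - k) := by
  refine le_of_forall_pos_le_add fun ε hε => ?_
  have hβ : 0 ≤ β := (norm_nonneg _).trans (hgrad P le_rfl)
  set C := β * ‖k‖ + ε
  have hC : 0 < C := by positivity
  have hderiv : ∀ t : ℝ, HasDerivAt (fun t : ℝ => -f (P - t • k)) (fderiv ℝ f (P - t • k) k) t :=
    fun t => by
      have hpath : HasDerivAt (fun t : ℝ => P - t • k) (-k) t := by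
        simpa using ((hasDerivAt_id t).smul_const k).const_sub P
      simpa using ((hf _).hasFDerivAt.comp_hasDerivAt t hpath).fun_neg
  -- `-f (P - t • k)` can only touch the barrier `C t - f P` inside the sublevel set `{f ≤ f P}`,
  -- where its slope is at most `β ‖k‖ < C`.
  have hslope : ∀ t ∈ Ico (0 : ℝ) 1, -f (P - t • k) = C * t - f P →
      fderiv ℝ f (P - t • k) k < C * 1 := fun t ht htouch => by
    have hsub : f (P - t • k) ≤ f P := by nlinarith [ht.1]
    calc fderiv ℝ f (P - t • k) k ≤ ‖fderiv ℝ f (P - t • k)‖ * ‖k‖ :=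
          (le_abs_self _).trans ((fderiv ℝ f _).le_opNorm k)
      _ ≤ β * ‖k‖ := by gcongr; exact hgrad _ hsub
      _ < C * 1 := by simp [C, hε]
  have hbarrier := image_le_of_deriv_right_lt_deriv_boundary
    (fun t _ => (hderiv t).continuousAt.continuousWithinAt) (fun t _ => (hderiv t).hasDerivWithinAt)
    (B := fun t => C * t - f P) (by simp) (fun t => ((hasDerivAt_id t).const_mul C).sub_const _)
    hslope (right_mem_Icc.2 zero_le_one)
  simp only [one_smul, mul_one] at hbarrier
  linarith

end SublevelSet

section HessianBound

variable {E F : Type*} [NormedAddCommGroup E] [NormedSpace ℝ E]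
  [NormedAddCommGroup F] [NormedSpace ℝ F] {f : E → F} {B : ℝ}

theorem norm_fderiv_sub_fderiv_le_of_norm_iteratedFDeriv_two_le (hf : ContDiff ℝ 2 f)
    (hB : ∀ p, ‖iteratedFDeriv ℝ 2 f p‖ ≤ B) (x y : E) :
    ‖fderiv ℝ f x - fderiv ℝ f y‖ ≤ B * ‖x - y‖ :=
  convex_univ.norm_image_sub_le_of_norm_fderiv_le
    (fun z _ => ((hf.fderiv_right (by norm_num)).differentiable one_ne_zero).differentiableAt)
    (fun z _ => (norm_iteratedFDeriv_one (fderiv ℝ f)).symm.trans_le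
      (norm_iteratedFDeriv_fderiv.trans_le (hB z)))
    (mem_univ y) (mem_univ x)

theorem norm_second_difference_le_of_norm_iteratedFDeriv_two_le (hf : ContDiff ℝ 2 f)
    (hB : ∀ p, ‖iteratedFDeriv ℝ 2 f p‖ ≤ B) (q x y : E) :
    ‖(f (x - q) - f x) - (f (y - q) - f y)‖ ≤ B * ‖q‖ * ‖x - y‖ := by
  have hd : Differentiable ℝ f := hf.differentiable (by norm_num)
  have hder : ∀ z, HasFDerivAt (fun w => f (w - q) - f w)
      (fderiv ℝ f (z - q) - fderiv ℝ f z) z := fun z =>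
    ((hd (z - q)).hasFDerivAt.comp z ((hasFDerivAt_id z).sub_const q)).sub (hd z).hasFDerivAt
  refine convex_univ.norm_image_sub_le_of_norm_hasFDerivWithin_le
    (fun z _ => (hder z).hasFDerivWithinAt) (fun z _ => ?_) (mem_univ y) (mem_univ x)
  simpa using norm_fderiv_sub_fderiv_le_of_norm_iteratedFDeriv_two_le hf hB (z - q) z

end HessianBound

theorem statement6_general (Ω : EuclideanSpace ℝ (Fin 3) → ℝ) (hΩ : ContDiff ℝ 2 Ω)
    (B : ℝ) (hB : ∀ p : EuclideanSpace ℝ (Fin 3), ‖iteratedFDeriv ℝ 2 Ω p‖ ≤ B)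
    (β : ℝ) (O : ℝ)
    (hgrad : ∀ q : EuclideanSpace ℝ (Fin 3), Ω q ≤ O → ‖gradient Ω q‖ ≤ β) :
    ∀ P : EuclideanSpace ℝ (Fin 3), Ω P ≤ O →
      ∀ k q : EuclideanSpace ℝ (Fin 3),
        Ω (P - k - q) - Ω (P - q) ≥ -β * ‖k‖ - B * ‖k‖ * ‖q‖ := by
  intro P hP k q
  have hfderiv : ∀ x, Ω x ≤ Ω P → ‖fderiv ℝ Ω x‖ ≤ β := fun x hx => by
    simpa [gradient] using hgrad x (hx.trans hP)
  have hdescent := le_apply_sub_of_norm_fderiv_le_on_sublevelSet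
    (hΩ.differentiable (by norm_num)) hfderiv k
  have hshift := norm_second_difference_le_of_norm_iteratedFDeriv_two_le hΩ hB q (P - k) P
  rw [Real.norm_eq_abs, sub_sub_cancel_left, norm_neg] at hshift
  linarith [(abs_le.mp hshift).1, mul_right_comm B ‖q‖ ‖k‖]

/-- Let `Ω : ℝ³ → ℝ` be `C²` with Hessian uniformly bounded in operator
norm by `B`, let `β > 0` and suppose `|∇Ω| ≤ β` on the sublevel set `{Ω ≤ O}`. Then for
every `P` with `Ω(P) ≤ O` and all `k, q`,
`Ω(P − k − q) − Ω(P − q) ≥ −β·|k| − B·|k|·|q|`. -/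
theorem statement6 (Ω : EuclideanSpace ℝ (Fin 3) → ℝ) (hΩ : ContDiff ℝ 2 Ω)
    (B : ℝ) (hB : ∀ p : EuclideanSpace ℝ (Fin 3), ‖iteratedFDeriv ℝ 2 Ω p‖ ≤ B)
    (β : ℝ) (hβ : 0 < β) (O : ℝ)
    (hgrad : ∀ q : EuclideanSpace ℝ (Fin 3), Ω q ≤ O → ‖gradient Ω q‖ ≤ β) :
    ∀ P : EuclideanSpace ℝ (Fin 3), Ω P ≤ O →
      ∀ k q : EuclideanSpace ℝ (Fin 3),
        Ω (P - k - q) - Ω (P - q) ≥ -β * ‖k‖ - B * ‖k‖ * ‖q‖ :=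
  statement6_general Ω hΩ B hB β O hgrad
end
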